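/- Let G be a finite group which is almost of characteristic p, and let P be a p-subgroup of G. Then O_{p'}(N_G(P)) = O_{p'}(G) ∩ N_G(P) = O_{p'}(G) ∩ C_G(P) = O_{p'}(C_G(P)). -/

import Mathlib

variable (p : ℕ) (G : Type*) [Group G]

/-- `O_p(G)`: the join of all normal `p`-subgroups of `G` (the largest normal `p`-subgroup
when `G` is finite). -/
def pCore : Subgroup G :=
  ⨆ H : {H : Subgroup G // H.Normal ∧ IsPGroup p H}, H.1

/-- `O_{p'}(G)`: the join of all normal subgroups of order coprime to `p` (the largest normal
`p'`-subgroup when `G` is finite). -/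
def pPrimeCore : Subgroup G :=
  ⨆ H : {H : Subgroup G // H.Normal ∧ Nat.Coprime (Nat.card H) p}, H.1

lemma iSup_normal {G : Type*} [Group G] {ι : Sort*} (H : ι → Subgroup G)
    (h : ∀ i, (H i).Normal) : (⨆ i, H i).Normal := by
  constructor
  intro n hn g
  refine Subgroup.iSup_induction (C := fun x => g * x * g⁻¹ ∈ ⨆ i, H i) H hn
    (fun i x hx => ?_) ?_ (fun x y hx hy => ?_)
  · exact Subgroup.mem_iSup_of_mem i ((h i).conj_mem x hx g)
  · simpa using Subgroup.one_mem (⨆ i, H i)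
  · have e : g * (x * y) * g⁻¹ = (g * x * g⁻¹) * (g * y * g⁻¹) := by group
    show g * (x * y) * g⁻¹ ∈ ⨆ i, H i
    rw [e]; exact mul_mem hx hy

instance pCore_normal : (pCore p G).Normal := iSup_normal _ (fun i => i.2.1)

instance pPrimeCore_normal : (pPrimeCore p G).Normal := iSup_normal _ (fun i => i.2.1)

/-- A group `G` is of characteristic `p` if `C_G(O_p(G)) ≤ O_p(G)`. -/
def IsCharP : Prop :=
  Subgroup.centralizer ((pCore p G : Subgroup G) : Set G) ≤ pCore p G

/-- A group `G` is almost of characteristic `p` if `G/O_{p'}(G)` is of characteristic `p`. -/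
def IsAlmostCharP : Prop := IsCharP p (G ⧸ pPrimeCore p G)

/-!
Write `θ(K)` for `O_{p'}(K)` and let `N = N_G(P)`, `C = C_G(P)`. The groups `θ(N)` and `P` are
normal in `N` of coprime orders, so they commute: `θ(N) ≤ C`. All remaining inclusions between
the four groups are formal, except `θ(N) ≤ θ(G)`. For that, pass to `Ḡ = G/θ(G)`, which has
characteristic `p`. By coprime action `C_Ḡ(P̄)` is the image of `C`, so the image of `θ(N)` is
a normal `p'`-subgroup of `C_Ḡ(P̄)`, hence trivial: in a group `H` of characteristic `p`,
`θ(C_H(R)) = 1` for every `p`-subgroup `R`. This last fact is proved by downward induction on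
`R`: if `O_p(H) ≤ R` then `θ(C_H(R)) ≤ C_H(O_p(H)) ≤ O_p(H)`; otherwise `R` is properly
contained in the `p`-group `R₁ = N_{O_p(H) R}(R)`, which `θ(C_H(R))` centralizes, so
`θ(C_H(R)) ≤ θ(C_H(R₁)) = 1`.
-/

open Subgroup

section GroupLemmas

variable {p G}

theorem le_centralizer_of_disjoint {H K : Subgroup G} (hHK : H ≤ normalizer (K : Set G))
    (hKH : K ≤ normalizer (H : Set G)) (hd : Disjoint H K) : H ≤ centralizer (K : Set G) := by
  rw [← commutator_eq_bot_iff_le_centralizer, eq_bot_iff, ← hd.eq_bot]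
  refine commutator_le.mpr fun h hh k hk => mem_inf.mpr ⟨?_, ?_⟩
  · have hk' : k * h⁻¹ * k⁻¹ ∈ H := (mem_normalizer_iff.mp (hKH hk) h⁻¹).mp (inv_mem hh)
    simpa only [commutatorElement_def, mul_assoc] using mul_mem hh hk'
  · exact mul_mem ((mem_normalizer_iff.mp (hHK hh) k).mp hk) (inv_mem hk)

theorem inf_normalizer_le_normalizer_sup {H K : Subgroup G} :
    normalizer (H : Set G) ⊓ normalizer (K : Set G) ≤ normalizer ((H ⊔ K :) : Set G) :=
  fun g hg => by
    obtain ⟨hH, hK⟩ := mem_inf.mp hg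
    rw [mem_normalizer_iff_map_conj_eq] at hH hK ⊢
    rw [Subgroup.map_sup, hH, hK]

theorem normalizer_le_normalizer_centralizer (s : Set G) :
    normalizer s ≤ normalizer (centralizer s : Set G) :=
  le_normalizer_of_normal_subgroupOf (centralizer_le_normalizer s)

theorem coprime_card_sup {H K : Subgroup G} [K.Normal] (hH : (Nat.card H).Coprime p)
    (hK : (Nat.card K).Coprime p) : (Nat.card ↥(H ⊔ K)).Coprime p := by
  rw [← relIndex_bot_left, ← relIndex_mul_relIndex ⊥ K (H ⊔ K) bot_le le_sup_right,
    relIndex_bot_left, relIndex_sup_right]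
  exact hK.mul_left (hH.coprime_dvd_left (relIndex_dvd_card _ _))

variable [Fact p.Prime]

theorem centralizer_map_mk_le {M : Subgroup G} [M.Normal] (hM : (Nat.card M).Coprime p)
    {P : Subgroup G} (hP : IsPGroup p P) :
    centralizer (P.map (QuotientGroup.mk' M) : Set (G ⧸ M)) ≤
      (centralizer (P : Set G)).map (QuotientGroup.mk' M) := by
  intro x hx
  obtain ⟨g, rfl⟩ := QuotientGroup.mk'_surjective M x
  -- `P` acts by conjugation on the coset `gM`, which has `|M|` elements, prime to `p`
  let _ : MulAction P G := MulAction.compHom G (MulAut.conj.comp P.subtype)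
  let F : SubMulAction P G :=
    { carrier := QuotientGroup.mk ⁻¹' {(g : G ⧸ M)}
      smul_mem' := fun u y (hy : (y : G ⧸ M) = g) => by
        have hu : ((u : G) : G ⧸ M) * g = g * (u : G) :=
          mem_centralizer_iff.mp hx _ (mem_map_of_mem _ u.2)
        change ((u * y * (u : G)⁻¹ : G) : G ⧸ M) = g
        rw [QuotientGroup.mk_mul, QuotientGroup.mk_mul, hy, hu, QuotientGroup.mk_inv,
          mul_inv_cancel_right] }
  have hF : ¬p ∣ Nat.card F := by
    change ¬p ∣ Nat.card (QuotientGroup.mk ⁻¹' {(g : G ⧸ M)})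
    rw [QuotientGroup.card_preimage_mk, Nat.card_unique (α := ({(g : G ⧸ M)} : Set _)), mul_one]
    exact (Nat.Prime.coprime_iff_not_dvd Fact.out).mp hM.symm
  obtain ⟨⟨c, hc⟩, hfix⟩ := hP.nonempty_fixed_point_of_prime_not_dvd_card F hF
  refine ⟨c, mem_centralizer_iff.mpr fun u hu => ?_, hc⟩
  have : u * c * u⁻¹ = c := congrArg Subtype.val (hfix ⟨u, hu⟩)
  exact (eq_mul_inv_iff_mul_eq.mp this.symm).symm

variable [Finite G]

theorem disjoint_of_isPGroup_of_coprime {P X : Subgroup G} (hP : IsPGroup p P)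
    (hX : (Nat.card X).Coprime p) : Disjoint P X := by
  obtain ⟨n, hn⟩ := hP.exists_card_eq
  exact disjoint_of_coprime_natCard (hn ▸ hX.symm.pow_left n)

theorem lt_inf_normalizer_of_lt {R T : Subgroup G} (hT : IsPGroup p T) (hRT : R < T) :
    R < T ⊓ normalizer (R : Set G) := by
  have := hT.isNilpotent
  have hR : R.subgroupOf T < ⊤ := lt_top_iff_ne_top.mpr (mt subgroupOf_eq_top.mp hRT.not_ge)
  have h := map_subtype_lt_map_subtype.mpr (Group.normalizerCondition_of_isNilpotent _ hR)
  rwa [← subgroupOf_normalizer_eq hRT.le, subgroupOf_map_subtype, subgroupOf_map_subtype,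
    inf_of_le_left hRT.le, inf_comm] at h

end GroupLemmas

section PPrimeCore

theorem coprime_card_pPrimeCore [Finite G] : (Nat.card (pPrimeCore p G)).Coprime p := by
  have hS : SupClosed {H : Subgroup G | H.Normal ∧ (Nat.card H).Coprime p} :=
    fun H ⟨_, hH⟩ K ⟨_, hK⟩ => ⟨inferInstance, coprime_card_sup hH hK⟩
  exact (hS.iSup_mem ⟨normal_bot, by simp⟩ fun N => N.2).2

theorem isPGroup_pCore [Finite G] : IsPGroup p (pCore p G) := by
  have hS : SupClosed {H : Subgroup G | H.Normal ∧ IsPGroup p H} :=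
    fun H ⟨_, hH⟩ K ⟨_, hK⟩ => ⟨inferInstance, hH.to_sup_of_normal_right hK⟩
  exact (hS.iSup_mem ⟨normal_bot, IsPGroup.of_bot⟩ fun N => N.2).2

variable {p G}

theorem le_pPrimeCore {N : Subgroup G} [hN : N.Normal] (hcard : (Nat.card N).Coprime p) :
    N ≤ pPrimeCore p G :=
  le_iSup_of_le (ι := {H : Subgroup G // H.Normal ∧ (Nat.card H).Coprime p}) ⟨N, hN, hcard⟩
    le_rfl

theorem map_pPrimeCore_le {G' : Type*} [Group G'] (e : G ≃* G') :
    (pPrimeCore p G).map (e : G →* G') ≤ pPrimeCore p G' := by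
  rw [pPrimeCore, Subgroup.map_iSup]
  refine iSup_le fun ⟨N, hN, hcard⟩ => ?_
  have := hN.map (e : G →* G') e.surjective
  exact le_pPrimeCore (by rwa [card_map_of_injective e.injective])

theorem map_pPrimeCore {G' : Type*} [Group G'] (e : G ≃* G') :
    (pPrimeCore p G).map (e : G →* G') = pPrimeCore p G' := by
  refine le_antisymm (map_pPrimeCore_le e) ?_
  rw [map_equiv_eq_comap_symm, ← map_le_iff_le_comap]
  exact map_pPrimeCore_le e.symm

end PPrimeCore

section PPrimeCoreOf

variable {G}

/-- `O_{p'}(K)` of a subgroup `K`, as a subgroup of the ambient group. -/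
def pPrimeCoreOf (K : Subgroup G) : Subgroup G := (pPrimeCore p K).map K.subtype

variable {p}

theorem pPrimeCoreOf_le (K : Subgroup G) : pPrimeCoreOf p K ≤ K := map_subtype_le _

theorem coprime_card_pPrimeCoreOf [Finite G] (K : Subgroup G) :
    (Nat.card (pPrimeCoreOf p K)).Coprime p := by
  rw [pPrimeCoreOf, card_map_of_injective K.subtype_injective]
  exact coprime_card_pPrimeCore p K

theorem le_pPrimeCoreOf {X K : Subgroup G} (hXK : X ≤ K) (hK : K ≤ normalizer (X : Set G))
    (hX : (Nat.card X).Coprime p) : X ≤ pPrimeCoreOf p K := by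
  have : (X.subgroupOf K).Normal := (normal_subgroupOf_iff_le_normalizer hXK).mpr hK
  have hmap : (X.subgroupOf K).map K.subtype = X := by
    rw [subgroupOf_map_subtype, inf_of_le_left hXK]
  have hcard : (Nat.card (X.subgroupOf K)).Coprime p := by
    rwa [← card_map_of_injective K.subtype_injective, hmap]
  exact hmap ▸ map_mono (le_pPrimeCore hcard)

theorem inf_le_pPrimeCoreOf [Finite G] (K : Subgroup G) :
    pPrimeCore p G ⊓ K ≤ pPrimeCoreOf p K :=
  le_pPrimeCoreOf inf_le_right
    ((le_inf le_normalizer_of_normal le_normalizer).trans inf_normalizer_le_normalizer_inf)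
    ((coprime_card_pPrimeCore p G).coprime_dvd_left (card_dvd_of_le inf_le_left))

theorem map_pPrimeCoreOf {G' : Type*} [Group G'] (e : G ≃* G') (K : Subgroup G) :
    (pPrimeCoreOf p K).map (e : G →* G') = pPrimeCoreOf p (K.map (e : G →* G')) := by
  rw [pPrimeCoreOf, pPrimeCoreOf, ← map_pPrimeCore (e.subgroupMap K), map_map, map_map]
  rfl

theorem normalizer_le_normalizer_pPrimeCoreOf (K : Subgroup G) :
    normalizer (K : Set G) ≤ normalizer (pPrimeCoreOf p K : Set G) := fun g hg => by
  rw [mem_normalizer_iff_map_conj_eq] at hg ⊢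
  rw [map_pPrimeCoreOf, hg]

theorem le_normalizer_pPrimeCoreOf (K : Subgroup G) :
    K ≤ normalizer (pPrimeCoreOf p K : Set G) :=
  le_normalizer.trans (normalizer_le_normalizer_pPrimeCoreOf K)

theorem pPrimeCoreOf_mono_of_le_normalizer [Finite G] {H K : Subgroup G} (hHK : H ≤ K)
    (hK : K ≤ normalizer (H : Set G)) : pPrimeCoreOf p H ≤ pPrimeCoreOf p K :=
  le_pPrimeCoreOf ((pPrimeCoreOf_le H).trans hHK)
    (hK.trans (normalizer_le_normalizer_pPrimeCoreOf H)) (coprime_card_pPrimeCoreOf H)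

end PPrimeCoreOf

section FiniteGroups

variable {p G} [Finite G] [Fact p.Prime]

theorem pPrimeCoreOf_normalizer_le_centralizer {P : Subgroup G} (hP : IsPGroup p P) :
    pPrimeCoreOf p (normalizer (P : Set G)) ≤ centralizer (P : Set G) :=
  le_centralizer_of_disjoint (pPrimeCoreOf_le _)
    (le_normalizer.trans (le_normalizer_pPrimeCoreOf _))
    (disjoint_of_isPGroup_of_coprime hP (coprime_card_pPrimeCoreOf _)).symm

theorem pPrimeCoreOf_centralizer_le_centralizer {R S : Subgroup G} (hS : IsPGroup p S)
    (hSR : S ≤ normalizer (R : Set G))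
    (hRS : centralizer (R : Set G) ≤ normalizer (S : Set G)) :
    pPrimeCoreOf p (centralizer (R : Set G)) ≤ centralizer (S : Set G) :=
  le_centralizer_of_disjoint ((pPrimeCoreOf_le _).trans hRS)
    ((hSR.trans (normalizer_le_normalizer_centralizer _)).trans
      (normalizer_le_normalizer_pPrimeCoreOf _))
    (disjoint_of_isPGroup_of_coprime hS (coprime_card_pPrimeCoreOf _)).symm

theorem pPrimeCoreOf_centralizer_eq_bot_of_pCore_le (hG : IsCharP p G) {R : Subgroup G}
    (hR : pCore p G ≤ R) : pPrimeCoreOf p (centralizer (R : Set G)) = ⊥ := by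
  have hle : pPrimeCoreOf p (centralizer (R : Set G)) ≤ pCore p G :=
    ((pPrimeCoreOf_le _).trans (centralizer_le hR)).trans hG
  exact disjoint_self.mp (disjoint_of_isPGroup_of_coprime ((isPGroup_pCore p G).to_le hle)
    (coprime_card_pPrimeCoreOf _))

theorem pPrimeCoreOf_centralizer_eq_bot (hG : IsCharP p G) {R : Subgroup G}
    (hR : IsPGroup p R) : pPrimeCoreOf p (centralizer (R : Set G)) = ⊥ := by
  induction R using WellFoundedGT.induction with | _ R ih =>
  by_cases hQR : pCore p G ≤ R
  · exact pPrimeCoreOf_centralizer_eq_bot_of_pCore_le hG hQR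
  set T := pCore p G ⊔ R
  set R₁ := T ⊓ normalizer (R : Set G)
  have hT : IsPGroup p T := (isPGroup_pCore p G).to_sup_of_normal_left hR
  have hRR₁ : R < R₁ := lt_inf_normalizer_of_lt hT (lt_of_le_not_ge le_sup_right
    fun h => hQR (le_sup_left.trans h))
  have hR₁ : IsPGroup p R₁ := hT.to_le inf_le_left
  have hCR : centralizer (R : Set G) ≤ normalizer (R : Set G) := centralizer_le_normalizer _
  have hCR₁ : centralizer (R : Set G) ≤ normalizer (R₁ : Set G) :=
    (le_inf ((le_inf le_normalizer_of_normal hCR).trans inf_normalizer_le_normalizer_sup)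
      (hCR.trans le_normalizer)).trans inf_normalizer_le_normalizer_inf
  have hX := pPrimeCoreOf_centralizer_le_centralizer hR₁ inf_le_right hCR₁
  rw [eq_bot_iff, ← ih R₁ hRR₁ hR₁]
  exact le_pPrimeCoreOf hX ((centralizer_le hRR₁.le).trans (le_normalizer_pPrimeCoreOf _))
    (coprime_card_pPrimeCoreOf _)

theorem pPrimeCoreOf_normalizer_le_pPrimeCore (hG : IsAlmostCharP p G)
    {P : Subgroup G} (hP : IsPGroup p P) :
    pPrimeCoreOf p (normalizer (P : Set G)) ≤ pPrimeCore p G := by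
  rw [← QuotientGroup.ker_mk' (pPrimeCore p G), ← Subgroup.map_eq_bot_iff, eq_bot_iff,
    ← pPrimeCoreOf_centralizer_eq_bot hG (hP.map (QuotientGroup.mk' _))]
  refine le_pPrimeCoreOf ?_ ?_ ((coprime_card_pPrimeCoreOf _).coprime_dvd_left (card_map_dvd _ _))
  · rw [coe_map]
    exact (map_mono (pPrimeCoreOf_normalizer_le_centralizer hP)).trans
      (map_centralizer_le_centralizer_image _ _)
  · exact (centralizer_map_mk_le (coprime_card_pPrimeCore p G) hP).trans
      ((map_mono ((centralizer_le_normalizer _).trans (le_normalizer_pPrimeCoreOf _))).trans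
        (le_normalizer_map _))

end FiniteGroups

/-- Let `G` be a finite group which is almost of characteristic `p` and `P` a `p`-subgroup.
Then `O_{p'}(N_G(P)) = O_{p'}(G) ∩ N_G(P) = O_{p'}(G) ∩ C_G(P) = O_{p'}(C_G(P))`
(as subgroups of `G`). -/
theorem pPrimeCore_normalizer_eq (p : ℕ) [Fact p.Prime] (G : Type*) [Group G] [Finite G]
    (hG : IsAlmostCharP p G) (P : Subgroup G) (hP : IsPGroup p P) :
    Subgroup.map (Subgroup.normalizer (P : Set G)).subtype (pPrimeCore p (Subgroup.normalizer (P : Set G))) =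
        pPrimeCore p G ⊓ (Subgroup.normalizer (P : Set G)) ∧
      pPrimeCore p G ⊓ (Subgroup.normalizer (P : Set G)) =
        pPrimeCore p G ⊓ Subgroup.centralizer (P : Set G) ∧
      pPrimeCore p G ⊓ Subgroup.centralizer (P : Set G) =
        Subgroup.map (Subgroup.centralizer (P : Set G)).subtype
          (pPrimeCore p (Subgroup.centralizer (P : Set G))) := by
  have hNG := pPrimeCoreOf_normalizer_le_pPrimeCore hG hP
  have hNC := pPrimeCoreOf_normalizer_le_centralizer hP
  have hCN : pPrimeCoreOf p (centralizer (P : Set G)) ≤ pPrimeCoreOf p (normalizer (P : Set G)) :=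
    pPrimeCoreOf_mono_of_le_normalizer (centralizer_le_normalizer _)
      (normalizer_le_normalizer_centralizer _)
  refine ⟨?_, ?_, ?_⟩
  · exact le_antisymm (le_inf hNG (pPrimeCoreOf_le _)) (inf_le_pPrimeCoreOf _)
  · exact le_antisymm (le_inf inf_le_left ((inf_le_pPrimeCoreOf _).trans hNC))
      (inf_le_inf_left _ (centralizer_le_normalizer _))
  · exact le_antisymm (inf_le_pPrimeCoreOf _) (le_inf (hCN.trans hNG) (pPrimeCoreOf_le _))
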